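/- Let r > 0, let M be a real 2×2 matrix with det M = 0, and let g be a real symmetric 2×2 matrix with 4 det g ≥ 1. Then the output matrix σ' = (I₂ ⊕ M) γ_TMSS,r (I₂ ⊕ M)ᵀ + (0 ⊕ g), with 2×2 blocks [[α', γ'],[γ'ᵀ, β']], satisfies the separability condition det α' + det β' − 2 det γ' ≤ 4 det σ' + 1/4. In other words, a one-sided Gaussian channel whose matrix f satisfies det f = 0 (for which the channel physicality condition 4 det g ≥ (det f − 1)² reads 4 det g ≥ 1) outputs only separable states. -/

import Mathlib

open Matrix

/-- Direct sum of two real 2×2 matrices, as a 4×4 (block) matrix. -/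
noncomputable def dsum (A B : Matrix (Fin 2) (Fin 2) ℝ) :
    Matrix (Fin 2 ⊕ Fin 2) (Fin 2 ⊕ Fin 2) ℝ :=
  Matrix.fromBlocks A 0 0 B

/-- The Pauli-z matrix σ_z = diag(1, -1). -/
noncomputable def sigmaZ : Matrix (Fin 2) (Fin 2) ℝ := !![1, 0; 0, -1]

/-- Covariance matrix of the two-mode squeezed state with squeezing `r`. -/
noncomputable def tmss (r : ℝ) : Matrix (Fin 2 ⊕ Fin 2) (Fin 2 ⊕ Fin 2) ℝ :=
  (1/2 : ℝ) • Matrix.fromBlocks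
    (Real.cosh r • (1 : Matrix (Fin 2) (Fin 2) ℝ)) (Real.sinh r • sigmaZ)
    (Real.sinh r • sigmaZ) (Real.cosh r • (1 : Matrix (Fin 2) (Fin 2) ℝ))

/-- Separability condition det α + det β − 2 det γ ≤ 4 det σ + 1/4
for a 4×4 covariance matrix σ with blocks [[α, γ],[γᵀ, β]]. -/
def sepCond (σ : Matrix (Fin 2 ⊕ Fin 2) (Fin 2 ⊕ Fin 2) ℝ) : Prop :=
  (σ.toBlocks₁₁).det + (σ.toBlocks₂₂).det - 2 * (σ.toBlocks₁₂).det ≤ 4 * σ.det + 1/4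

/-- Physicality (Robertson–Schrödinger) condition det α + det β + 2 det γ ≤ 4 det σ + 1/4
for a 4×4 covariance matrix σ with blocks [[α, γ],[γᵀ, β]]. -/
def physCond (σ : Matrix (Fin 2 ⊕ Fin 2) (Fin 2 ⊕ Fin 2) ℝ) : Prop :=
  (σ.toBlocks₁₁).det + (σ.toBlocks₂₂).det + 2 * (σ.toBlocks₁₂).det ≤ 4 * σ.det + 1/4

/-!
The Schur complement of the top-left block `(cosh r / 2) • 1`, together with `σ_z² = 1` and
`cosh² r - sinh² r = 1`, gives `det σ' = (cosh r / 2)² det (g + (2 cosh r)⁻¹ • M Mᵀ)`, while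
`det β' = det (g + (cosh r / 2) • M Mᵀ)` and `det γ' = 0`. Since `det (M Mᵀ) = 0`, the map
`t ↦ det (g + t • M Mᵀ)` is affine, so both sides of the separability condition contain the same
term `(cosh r / 2) κ` with `κ = tr (adj g · M Mᵀ)`, and what remains is
`(cosh² r - 1)(4 det g - 1) ≥ 0`.
-/

theorem det_fromBlocks_smul_one₁₁ {K m n : Type*} [Field K] [Fintype m] [DecidableEq m]
    [Fintype n] [DecidableEq n] {a : K} (ha : a ≠ 0) (B : Matrix m n K) (C : Matrix n m K)
    (D : Matrix n n K) :
    (fromBlocks (a • 1) B C D).det = a ^ Fintype.card m * (D - a⁻¹ • (C * B)).det := by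
  have hfactor :
      fromBlocks (a • 1) B C D = fromBlocks (a • 1) 0 0 1 * fromBlocks 1 (a⁻¹ • B) C D := by
    simp [fromBlocks_multiply, smul_smul, ha]
  rw [hfactor, det_mul, det_fromBlocks_zero₁₂, det_fromBlocks_one₁₁, det_smul, Matrix.mul_smul]
  simp

theorem det_fin_two_add_smul_of_det_eq_zero {R : Type*} [CommRing R]
    (A P : Matrix (Fin 2) (Fin 2) R) (hP : P.det = 0) (t : R) :
    (A + t • P).det = A.det + t * (adjugate A * P).trace := by
  rw [det_fin_two] at hP
  simp only [det_fin_two, adjugate_fin_two, trace_fin_two, Matrix.add_apply, Matrix.smul_apply,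
    mul_apply, Fin.sum_univ_two, smul_eq_mul, of_apply, cons_val', cons_val_zero, cons_val_one,
    empty_val', cons_val_fin_one]
  linear_combination t ^ 2 * hP

theorem dsum_mul_fromBlocks_mul_transpose (A B P Q R S : Matrix (Fin 2) (Fin 2) ℝ) :
    dsum A B * fromBlocks P Q R S * (dsum A B)ᵀ =
      fromBlocks (A * P * Aᵀ) (A * Q * Bᵀ) (B * R * Aᵀ) (B * S * Bᵀ) := by
  simp [dsum, fromBlocks_transpose, fromBlocks_multiply]

theorem sigmaZ_mul_self : sigmaZ * sigmaZ = 1 := by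
  ext i j; fin_cases i <;> fin_cases j <;> simp [sigmaZ]

theorem tmss_output_eq_fromBlocks (r : ℝ) (M g : Matrix (Fin 2) (Fin 2) ℝ) :
    dsum 1 M * tmss r * (dsum 1 M)ᵀ + dsum 0 g =
      fromBlocks ((Real.cosh r / 2) • 1) ((Real.sinh r / 2) • (sigmaZ * Mᵀ))
        ((Real.sinh r / 2) • (M * sigmaZ)) (g + (Real.cosh r / 2) • (M * Mᵀ)) := by
  rw [tmss, fromBlocks_smul, dsum_mul_fromBlocks_mul_transpose, dsum, fromBlocks_add]
  congr 1 <;> simp [smul_smul, div_eq_inv_mul, add_comm]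

theorem det_tmss_output (r : ℝ) (M g : Matrix (Fin 2) (Fin 2) ℝ) :
    (dsum 1 M * tmss r * (dsum 1 M)ᵀ + dsum 0 g).det =
      (Real.cosh r / 2) ^ 2 * (g + (2 * Real.cosh r)⁻¹ • (M * Mᵀ)).det := by
  have hcosh : Real.cosh r / 2 ≠ 0 := by positivity
  rw [tmss_output_eq_fromBlocks, det_fromBlocks_smul_one₁₁ hcosh, Fintype.card_fin]
  have hsigmaZ : M * sigmaZ * (sigmaZ * Mᵀ) = M * Mᵀ := by
    rw [Matrix.mul_assoc, ← Matrix.mul_assoc sigmaZ, sigmaZ_mul_self, Matrix.one_mul]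
  have hscalar : Real.cosh r / 2 - (Real.cosh r / 2)⁻¹ * (Real.sinh r / 2 * (Real.sinh r / 2)) =
      (2 * Real.cosh r)⁻¹ := by
    field_simp
    linear_combination Real.cosh_sq_sub_sinh_sq r
  rw [smul_mul_smul_comm, hsigmaZ, smul_smul, add_sub_assoc, ← sub_smul, hscalar]

theorem stmt7_general (r : ℝ) (M g : Matrix (Fin 2) (Fin 2) ℝ)
    (hM : M.det = 0) (hgdet : 4 * g.det ≥ 1) :
    sepCond (dsum 1 M * tmss r * (dsum 1 M)ᵀ + dsum 0 g) := by
  have hMMt : (M * Mᵀ).det = 0 := by rw [det_mul, hM, zero_mul]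
  have hc : 1 ≤ Real.cosh r := Real.one_le_cosh r
  have hgap : 0 ≤ (Real.cosh r ^ 2 - 1) * (4 * g.det - 1) := by
    apply mul_nonneg <;> nlinarith
  rw [sepCond, det_tmss_output, tmss_output_eq_fromBlocks, toBlocks_fromBlocks₁₁,
    toBlocks_fromBlocks₁₂, toBlocks_fromBlocks₂₂, det_fin_two_add_smul_of_det_eq_zero _ _ hMMt,
    det_fin_two_add_smul_of_det_eq_zero _ _ hMMt, det_smul, det_smul, det_mul, det_transpose, hM,
    det_one, Fintype.card_fin]
  have hcosh_inv : Real.cosh r * (Real.cosh r)⁻¹ = 1 := mul_inv_cancel₀ (by positivity)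
  linear_combination hgap / 4 - Real.cosh r * (g.adjugate * (M * Mᵀ)).trace / 2 * hcosh_inv

theorem stmt7 (r : ℝ) (hr : 0 < r) (M g : Matrix (Fin 2) (Fin 2) ℝ)
    (hM : M.det = 0) (hg : g.IsSymm) (hgdet : 4 * g.det ≥ 1) :
    sepCond (dsum 1 M * tmss r * (dsum 1 M)ᵀ + dsum 0 g) :=
  stmt7_general r M g hM hgdet
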